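/- For every c ∈ ℝ there exists h ∈ Symp(D) restricting to the identity on ∂D such that lim_{n→∞} τ_λ(hⁿ)/n = c. In particular the homogenized quasi-morphism τ̄ : Symp(D) → ℝ, τ̄(g) = lim_{n→∞} τ_λ(gⁿ)/n, is surjective. -/

import Mathlib

open MeasureTheory Filter Topology Set Function Real

noncomputable section

/-- The closed unit disk in `ℝ²`. -/
def disk : Set (ℝ × ℝ) := {p | p.1 ^ 2 + p.2 ^ 2 ≤ 1}

/-- The boundary circle of the unit disk. -/
def bdry : Set (ℝ × ℝ) := {p | p.1 ^ 2 + p.2 ^ 2 = 1}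

/-- Partial derivative in the `x`-direction. -/
def pdx (f : ℝ × ℝ → ℝ) (p : ℝ × ℝ) : ℝ := fderiv ℝ f p (1, 0)

/-- Partial derivative in the `y`-direction. -/
def pdy (f : ℝ × ℝ → ℝ) (p : ℝ × ℝ) : ℝ := fderiv ℝ f p (0, 1)

/-- The Jacobian determinant of a map `ℝ² → ℝ²`. -/
def jacDet (g : ℝ × ℝ → ℝ × ℝ) (p : ℝ × ℝ) : ℝ :=
  pdx (fun q => (g q).1) p * pdy (fun q => (g q).2) p -
    pdy (fun q => (g q).1) p * pdx (fun q => (g q).2) p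

/-- `g` represents an element of `Symp(D)`: a `C^∞` diffeomorphism of the closed
unit disk onto itself (smooth up to the boundary, i.e. the restriction of a
globally smooth map with globally smooth inverse on the disk) whose Jacobian
determinant is identically `1` on the disk. -/
def IsSymp (g : ℝ × ℝ → ℝ × ℝ) : Prop :=
  ContDiff ℝ (⊤ : ℕ∞) g ∧ MapsTo g disk disk ∧ (∀ p ∈ disk, jacDet g p = 1) ∧
    ∃ g' : ℝ × ℝ → ℝ × ℝ, ContDiff ℝ (⊤ : ℕ∞) g' ∧ MapsTo g' disk disk ∧
      (∀ p ∈ disk, g' (g p) = p) ∧ (∀ p ∈ disk, g (g' p) = p)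

/-- `g` represents an element of `G_o`: a symplectomorphism of the disk fixing the origin. -/
def IsSympO (g : ℝ × ℝ → ℝ × ℝ) : Prop :=
  IsSymp g ∧ g (0, 0) = (0, 0)

/-- `τ_λ(g) = ∫_D g*λ ∧ λ` for `λ = (x dy - y dx)/2`, written out in coordinates. -/
def tauL (g : ℝ × ℝ → ℝ × ℝ) : ℝ :=
  (1 / 4) * ∫ p in disk,
    (p.1 * ((g p).1 * pdx (fun q => (g q).2) p - (g p).2 * pdx (fun q => (g q).1) p) +
     p.2 * ((g p).1 * pdy (fun q => (g q).2) p - (g p).2 * pdy (fun q => (g q).1) p))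

/-- `σ(g) = ∫_γ (g*λ - λ)` along the radial path `γ(t) = (t,0)`, in coordinates. -/
def sigmaQ (g : ℝ × ℝ → ℝ × ℝ) : ℝ :=
  (1 / 2) * ∫ t in (0:ℝ)..1,
    ((g (t, 0)).1 * pdx (fun q => (g q).2) (t, 0) -
      (g (t, 0)).2 * pdx (fun q => (g q).1) (t, 0))

/-- `G` is a smooth isotopy in `Symp(D)` starting at the identity. -/
def IsIsotopy (G : ℝ → ℝ × ℝ → ℝ × ℝ) : Prop :=
  ContDiff ℝ (⊤ : ℕ∞) (fun q : ℝ × (ℝ × ℝ) => G q.1 q.2) ∧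
    (∀ t ∈ Icc (0:ℝ) 1, IsSymp (G t)) ∧ (∀ p ∈ disk, G 0 p = p)

/-- `f` is a family of Hamiltonian functions for the isotopy `G`, i.e.
`i_{X_t} ω = d f_t` where `X_t = (∂g_t/∂t) ∘ g_t⁻¹`; since `g_t` maps the disk
onto itself this is expressed at the points `G t p`, `p ∈ D`. -/
def IsHam (G : ℝ → ℝ × ℝ → ℝ × ℝ) (f : ℝ → ℝ × ℝ → ℝ) : Prop :=
  ContDiff ℝ (⊤ : ℕ∞) (fun q : ℝ × (ℝ × ℝ) => f q.1 q.2) ∧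
    ∀ t ∈ Icc (0:ℝ) 1, ∀ p ∈ disk,
      pdx (f t) (G t p) = -(deriv (fun s => G s p) t).2 ∧
      pdy (f t) (G t p) = (deriv (fun s => G s p) t).1

/-- `φ` is the lift of the boundary isotopy of `G`, with `φ 0 = id`. -/
def IsBoundaryLift (G : ℝ → ℝ × ℝ → ℝ × ℝ) (φ : ℝ → ℝ → ℝ) : Prop :=
  ContDiff ℝ (⊤ : ℕ∞) (fun q : ℝ × ℝ => φ q.1 q.2) ∧
    (∀ t ∈ Icc (0:ℝ) 1, StrictMono (φ t) ∧ ∀ θ : ℝ, φ t (θ + 2 * π) = φ t θ + 2 * π) ∧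
    (∀ θ : ℝ, φ 0 θ = θ) ∧
    (∀ t ∈ Icc (0:ℝ) 1, ∀ θ : ℝ,
      G t (Real.cos θ, Real.sin θ) = (Real.cos (φ t θ), Real.sin (φ t θ)))

def th (b : ℝ) (p : ℝ × ℝ) : ℝ := b * (1 - p.1 * p.1 - p.2 * p.2)
def tw (b : ℝ) (p : ℝ × ℝ) : ℝ × ℝ :=
  (p.1 * Real.cos (th b p) - p.2 * Real.sin (th b p),
   p.1 * Real.sin (th b p) + p.2 * Real.cos (th b p))

lemma hasF_th (b : ℝ) (p : ℝ × ℝ) :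
    HasFDerivAt (th b)
      (b • (((0 : ℝ × ℝ →L[ℝ] ℝ)
        - (p.1 • ContinuousLinearMap.fst ℝ ℝ ℝ + p.1 • ContinuousLinearMap.fst ℝ ℝ ℝ))
        - (p.2 • ContinuousLinearMap.snd ℝ ℝ ℝ + p.2 • ContinuousLinearMap.snd ℝ ℝ ℝ))) p := by
  have h1 : HasFDerivAt (fun q : ℝ × ℝ => q.1) (ContinuousLinearMap.fst ℝ ℝ ℝ) p :=
    hasFDerivAt_fst
  have h2 : HasFDerivAt (fun q : ℝ × ℝ => q.2) (ContinuousLinearMap.snd ℝ ℝ ℝ) p :=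
    hasFDerivAt_snd
  exact (((hasFDerivAt_const (1:ℝ) p).sub (h1.mul h1)).sub (h2.mul h2)).const_mul b

lemma hasF_tw1 (b : ℝ) (p : ℝ × ℝ) : ∃ L : ℝ × ℝ →L[ℝ] ℝ,
    HasFDerivAt (fun q => (tw b q).1) L p ∧
    L (1, 0) = Real.cos (th b p) + 2*b*p.1*(p.1 * Real.sin (th b p) + p.2 * Real.cos (th b p)) ∧
    L (0, 1) = -Real.sin (th b p) + 2*b*p.2*(p.1 * Real.sin (th b p) + p.2 * Real.cos (th b p)) := by
  have h1 : HasFDerivAt (fun q : ℝ × ℝ => q.1) (ContinuousLinearMap.fst ℝ ℝ ℝ) p :=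
    hasFDerivAt_fst
  have h2 : HasFDerivAt (fun q : ℝ × ℝ => q.2) (ContinuousLinearMap.snd ℝ ℝ ℝ) p :=
    hasFDerivAt_snd
  have hth := hasF_th b p
  have hc := (Real.hasDerivAt_cos (th b p)).comp_hasFDerivAt p hth
  have hs := (Real.hasDerivAt_sin (th b p)).comp_hasFDerivAt p hth
  have hu := (h1.mul hc).sub (h2.mul hs)
  refine ⟨_, hu, ?_, ?_⟩ <;>
  · simp [ContinuousLinearMap.sub_apply, ContinuousLinearMap.add_apply,
      ContinuousLinearMap.smul_apply, smul_eq_mul]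
    ring

lemma hasF_tw2 (b : ℝ) (p : ℝ × ℝ) : ∃ L : ℝ × ℝ →L[ℝ] ℝ,
    HasFDerivAt (fun q => (tw b q).2) L p ∧
    L (1, 0) = Real.sin (th b p) - 2*b*p.1*(p.1 * Real.cos (th b p) - p.2 * Real.sin (th b p)) ∧
    L (0, 1) = Real.cos (th b p) - 2*b*p.2*(p.1 * Real.cos (th b p) - p.2 * Real.sin (th b p)) := by
  have h1 : HasFDerivAt (fun q : ℝ × ℝ => q.1) (ContinuousLinearMap.fst ℝ ℝ ℝ) p :=
    hasFDerivAt_fst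
  have h2 : HasFDerivAt (fun q : ℝ × ℝ => q.2) (ContinuousLinearMap.snd ℝ ℝ ℝ) p :=
    hasFDerivAt_snd
  have hth := hasF_th b p
  have hc := (Real.hasDerivAt_cos (th b p)).comp_hasFDerivAt p hth
  have hs := (Real.hasDerivAt_sin (th b p)).comp_hasFDerivAt p hth
  have hv := (h1.mul hs).add (h2.mul hc)
  refine ⟨_, hv, ?_, ?_⟩ <;>
  · simp [ContinuousLinearMap.sub_apply, ContinuousLinearMap.add_apply,
      ContinuousLinearMap.smul_apply, smul_eq_mul]
    ring

lemma pdx_tw1 (b : ℝ) (p : ℝ × ℝ) :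
    pdx (fun q => (tw b q).1) p
      = Real.cos (th b p) + 2*b*p.1*(p.1 * Real.sin (th b p) + p.2 * Real.cos (th b p)) := by
  obtain ⟨L, hL, h1, _⟩ := hasF_tw1 b p
  rw [pdx, hL.fderiv, h1]

lemma pdy_tw1 (b : ℝ) (p : ℝ × ℝ) :
    pdy (fun q => (tw b q).1) p
      = -Real.sin (th b p) + 2*b*p.2*(p.1 * Real.sin (th b p) + p.2 * Real.cos (th b p)) := by
  obtain ⟨L, hL, _, h2⟩ := hasF_tw1 b p
  rw [pdy, hL.fderiv, h2]

lemma pdx_tw2 (b : ℝ) (p : ℝ × ℝ) :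
    pdx (fun q => (tw b q).2) p
      = Real.sin (th b p) - 2*b*p.1*(p.1 * Real.cos (th b p) - p.2 * Real.sin (th b p)) := by
  obtain ⟨L, hL, h1, _⟩ := hasF_tw2 b p
  rw [pdx, hL.fderiv, h1]

lemma pdy_tw2 (b : ℝ) (p : ℝ × ℝ) :
    pdy (fun q => (tw b q).2) p
      = Real.cos (th b p) - 2*b*p.2*(p.1 * Real.cos (th b p) - p.2 * Real.sin (th b p)) := by
  obtain ⟨L, hL, _, h2⟩ := hasF_tw2 b p
  rw [pdy, hL.fderiv, h2]

lemma jacDet_tw (b : ℝ) (p : ℝ × ℝ) : jacDet (tw b) p = 1 := by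
  have hcs := Real.sin_sq_add_cos_sq (th b p)
  simp only [jacDet, pdx_tw1, pdy_tw1, pdx_tw2, pdy_tw2]
  linear_combination hcs

lemma integrand_tw (b : ℝ) (p : ℝ × ℝ) :
    p.1 * ((tw b p).1 * pdx (fun q => (tw b q).2) p - (tw b p).2 * pdx (fun q => (tw b q).1) p) +
     p.2 * ((tw b p).1 * pdy (fun q => (tw b q).2) p - (tw b p).2 * pdy (fun q => (tw b q).1) p)
      = -(2*b) * (p.1 ^ 2 + p.2 ^ 2) ^ 2 := by
  have hcs := Real.sin_sq_add_cos_sq (th b p)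
  simp only [pdx_tw1, pdy_tw1, pdx_tw2, pdy_tw2]
  simp only [tw]
  linear_combination (-(2*b) * (p.1^2 + p.2^2)^2) * hcs

lemma tw_norm (b : ℝ) (p : ℝ × ℝ) :
    (tw b p).1 ^ 2 + (tw b p).2 ^ 2 = p.1 ^ 2 + p.2 ^ 2 := by
  have hcs := Real.sin_sq_add_cos_sq (th b p)
  simp only [tw]
  linear_combination (p.1^2 + p.2^2) * hcs

lemma th_tw (a b : ℝ) (p : ℝ × ℝ) : th b (tw a p) = th b p := by
  have h := tw_norm a p
  simp only [th]
  linear_combination (-b) * h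

lemma tw_comp (a b : ℝ) (p : ℝ × ℝ) : tw b (tw a p) = tw (a + b) p := by
  have hth : th b (tw a p) = th b p := th_tw a b p
  have hAB : th (a + b) p = th a p + th b p := by simp only [th]; ring
  have e1 : (tw b (tw a p)).1
      = (tw a p).1 * Real.cos (th b p) - (tw a p).2 * Real.sin (th b p) := by
    rw [show (tw b (tw a p)).1
      = (tw a p).1 * Real.cos (th b (tw a p)) - (tw a p).2 * Real.sin (th b (tw a p)) from rfl,
      hth]
  have e2 : (tw b (tw a p)).2
      = (tw a p).1 * Real.sin (th b p) + (tw a p).2 * Real.cos (th b p) := by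
    rw [show (tw b (tw a p)).2
      = (tw a p).1 * Real.sin (th b (tw a p)) + (tw a p).2 * Real.cos (th b (tw a p)) from rfl,
      hth]
  have h1 : (tw b (tw a p)).1 = (tw (a + b) p).1 := by
    rw [e1]; simp only [tw, hAB, Real.cos_add, Real.sin_add]; ring
  have h2 : (tw b (tw a p)).2 = (tw (a + b) p).2 := by
    rw [e2]; simp only [tw, hAB, Real.cos_add, Real.sin_add]; ring
  exact Prod.ext h1 h2

lemma tw_zero (p : ℝ × ℝ) : tw 0 p = p := by
  simp [tw, th]

lemma tw_iterate (b : ℝ) (n : ℕ) : (tw b)^[n] = tw (n * b) := by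
  induction n with
  | zero => funext p; simp [tw_zero]
  | succ n ih =>
    funext p
    rw [Function.iterate_succ_apply', ih, tw_comp]
    congr 1
    push_cast
    ring

lemma contDiff_tw (b : ℝ) : ContDiff ℝ (⊤ : ℕ∞) (tw b) := by
  have hth : ContDiff ℝ (⊤ : ℕ∞) (th b) :=
    ContDiff.mul contDiff_const
      ((contDiff_const.sub (contDiff_fst.mul contDiff_fst)).sub
        (contDiff_snd.mul contDiff_snd))
  exact ((contDiff_fst.mul (Real.contDiff_cos.comp hth)).sub
      (contDiff_snd.mul (Real.contDiff_sin.comp hth))).prodMk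
    ((contDiff_fst.mul (Real.contDiff_sin.comp hth)).add
      (contDiff_snd.mul (Real.contDiff_cos.comp hth)))

lemma mapsTo_tw (b : ℝ) : MapsTo (tw b) disk disk := by
  intro p hp
  simp only [disk, mem_setOf_eq] at hp ⊢
  rw [tw_norm]
  exact hp

lemma isSymp_tw (b : ℝ) : IsSymp (tw b) := by
  refine ⟨contDiff_tw b, mapsTo_tw b, fun p _ => jacDet_tw b p,
    tw (-b), contDiff_tw _, mapsTo_tw _, fun p _ => ?_, fun p _ => ?_⟩ <;>
  · rw [tw_comp]; norm_num [tw_zero]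

lemma bdry_tw (b : ℝ) : ∀ p ∈ bdry, tw b p = p := by
  intro p hp
  simp only [bdry, mem_setOf_eq] at hp
  have hth : th b p = 0 := by simp only [th]; linear_combination (-b) * hp
  simp [tw, hth]

lemma measurableSet_disk : MeasurableSet disk := by
  have : Measurable fun p : ℝ × ℝ => p.1 ^ 2 + p.2 ^ 2 := by fun_prop
  exact measurableSet_le this measurable_const

lemma integral_disk_rho_sq : (∫ p in disk, (p.1 ^ 2 + p.2 ^ 2) ^ 2) = π / 3 := by
  rw [← integral_indicator measurableSet_disk, ← integral_comp_polarCoord_symm]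
  have hset : polarCoord.target = Ioi (0:ℝ) ×ˢ Ioo (-π) π := rfl
  rw [hset]
  have hcongr : ∀ p ∈ Ioi (0:ℝ) ×ˢ Ioo (-π) π,
      p.1 • (disk.indicator (fun q : ℝ × ℝ => (q.1 ^ 2 + q.2 ^ 2) ^ 2) (polarCoord.symm p))
        = (Ioc (0:ℝ) 1).indicator (fun r => r ^ 5) p.1 * (1 : ℝ) := by
    rintro ⟨r, θ⟩ ⟨hr, hθ⟩
    simp only [mem_Ioi] at hr
    have hsym : polarCoord.symm (r, θ) = (r * Real.cos θ, r * Real.sin θ) := rfl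
    have hrho : (r * Real.cos θ) ^ 2 + (r * Real.sin θ) ^ 2 = r ^ 2 := by
      have := Real.sin_sq_add_cos_sq θ
      linear_combination r ^ 2 * this
    by_cases h1 : r ≤ 1
    · have hmem : (r * Real.cos θ, r * Real.sin θ) ∈ disk := by
        simp only [disk, mem_setOf_eq, hrho]
        nlinarith
      rw [hsym, indicator_of_mem hmem, indicator_of_mem (by exact ⟨hr, h1⟩)]
      simp only [smul_eq_mul, hrho]
      ring
    · have hmem : (r * Real.cos θ, r * Real.sin θ) ∉ disk := by
        simp only [disk, mem_setOf_eq, hrho]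
        push_neg at h1 ⊢
        nlinarith
      rw [hsym, indicator_of_notMem hmem, indicator_of_notMem (by
        simp only [mem_Ioc, not_and_or]; right; exact h1)]
      simp
  rw [setIntegral_congr_fun (measurableSet_Ioi.prod measurableSet_Ioo) hcongr]
  rw [Measure.volume_eq_prod,
    setIntegral_prod_mul (fun r => (Ioc (0:ℝ) 1).indicator (fun r => r ^ 5) r)
      (fun _ : ℝ => (1:ℝ)) (Ioi 0) (Ioo (-π) π)]
  have h2 : (∫ θ in Ioo (-π) π, (1:ℝ)) = 2 * π := by
    simp [Real.volume_Ioo]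
    rw [max_eq_left (by positivity)]
    ring
  have h1 : (∫ r in Ioi (0:ℝ), (Ioc (0:ℝ) 1).indicator (fun r => r ^ 5) r) = 1 / 6 := by
    rw [setIntegral_indicator measurableSet_Ioc]
    have : Ioi (0:ℝ) ∩ Ioc 0 1 = Ioc 0 1 := by
      apply inter_eq_self_of_subset_right
      exact fun x hx => hx.1
    rw [this, ← intervalIntegral.integral_of_le zero_le_one, integral_pow]
    norm_num
  rw [h1, h2]
  ring

lemma tauL_tw (b : ℝ) : tauL (tw b) = -(b * π) / 6 := by
  unfold tauL
  simp only [integrand_tw]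
  rw [MeasureTheory.integral_const_mul, integral_disk_rho_sq]
  ring


/-- for every `c ∈ ℝ` there is `h ∈ Symp(D)` which is the identity
on `∂D` with `lim_n τ_λ(hⁿ)/n = c`; in particular the homogenization
`τ̄(g) = lim_n τ_λ(gⁿ)/n` is surjective. -/
theorem tau_homogenization_surjective :
    ∀ c : ℝ, ∃ h : ℝ × ℝ → ℝ × ℝ, IsSymp h ∧ (∀ p ∈ bdry, h p = p) ∧
      Tendsto (fun n : ℕ => tauL h^[n] / (n : ℝ)) atTop (𝓝 c) := by
  intro c
  set b : ℝ := -(6 * c / π) with hb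
  refine ⟨tw b, isSymp_tw b, bdry_tw b, ?_⟩
  have key : ∀ᶠ n : ℕ in atTop, c = tauL (tw b)^[n] / (n : ℝ) := by
    filter_upwards [eventually_ge_atTop 1] with n hn
    have hn0 : (n : ℝ) ≠ 0 := by positivity
    rw [tw_iterate, tauL_tw, hb]
    field_simp
  exact tendsto_const_nhds.congr' key
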